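/- arXiv:1503.06935 — 4 statements merged into one kernel-verified Lean document; each statement's English description precedes it below -/
import Mathlib

section
/- Let Γ be an infinite torsion-free group that is finitely generated, residually finite, and co-Hopfian. Let φ: Γ → Γ be an endomorphism whose image has finite index in Γ. Then φ is an automorphism of Γ. -/
/-!
Only injectivity needs proof; surjectivity then comes from the co-Hopf property. Let `d` be the
index of the image of `φ` and suppose `φ k = 1` with `k ≠ 1`. Since `Γ` is torsion-free and
residually finite, some finite-index subgroup `H` avoids `k, k², …, kᵈ`. As `Γ` is finitely
generated, it has only finitely many actions on the finite set `Γ ⧸ H`; the intersection `N` of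
their kernels is a normal finite-index subgroup of `H` mapped into itself by every endomorphism.
So `φ` descends to an endomorphism `ψ` of the finite group `Γ ⧸ N`, whose kernel has order
`[Γ ⧸ N : ψ(Γ ⧸ N)] ≤ d` and contains the image of `k`, an element of order `> d`.
-/

open Subgroup

theorem MonoidHom.finite_of_fg {G Q : Type*} [Group G] [Group Q] [Group.FG G] [Finite Q] :
    Finite (G →* Q) := by
  obtain ⟨S, hS, hSfin⟩ := Group.fg_iff.mp ‹Group.FG G›
  have : Finite S := hSfin
  refine Finite.of_injective (fun f : G →* Q => S.domRestrict f) fun f g hfg => ?_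
  have hle : closure S ≤ f.eqLocus g := (closure_le _).2 fun x hx => congrFun hfg ⟨x, hx⟩
  exact MonoidHom.ext fun x => (hS ▸ hle) (mem_top x)

theorem MonoidHom.card_ker_eq_index_range {G : Type*} [Group G] [Finite G] (f : G →* G) :
    Nat.card f.ker = f.range.index := by
  have hker := card_mul_index f.ker
  have hrange := card_mul_index f.range
  rw [index_ker] at hker
  exact Nat.eq_of_mul_eq_mul_right Nat.card_pos (by rw [hker, ← hrange, mul_comm])

theorem QuotientGroup.index_range_map_dvd {G H : Type*} [Group G] [Group H]
    (M : Subgroup G) [M.Normal] (N : Subgroup H) [N.Normal] (φ : G →* H) (h : M ≤ N.comap φ) :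
    (QuotientGroup.map M N φ h).range.index ∣ φ.range.index := by
  have hrange : (QuotientGroup.map M N φ h).range = φ.range.map (QuotientGroup.mk' N) := calc
    _ = ((QuotientGroup.map M N φ h).comp (QuotientGroup.mk' M)).range := by
      rw [MonoidHom.range_comp, QuotientGroup.range_mk', ← MonoidHom.range_eq_map]
    _ = ((QuotientGroup.mk' N).comp φ).range := rfl
    _ = φ.range.map (QuotientGroup.mk' N) := MonoidHom.range_comp ..
  rw [hrange]
  exact index_map_dvd _ (QuotientGroup.mk'_surjective N)

namespace Subgroup

variable {G : Type*} [Group G]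

theorem exists_finiteIndex_forall_notMem {ι : Type*} [Finite ι]
    (hres : ∀ g : G, g ≠ 1 → ∃ H : Subgroup G, H.FiniteIndex ∧ g ∉ H)
    (x : ι → G) (hx : ∀ i, x i ≠ 1) : ∃ H : Subgroup G, H.FiniteIndex ∧ ∀ i, x i ∉ H := by
  choose H hH hxH using fun i => hres (x i) (hx i)
  exact ⟨⨅ i, H i, finiteIndex_iInf hH, fun i hi => hxH i (mem_iInf.mp hi i)⟩

def fullyInvariantCore (H : Subgroup G) : Subgroup G :=
  ⨅ f : G →* Equiv.Perm (G ⧸ H), f.ker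

instance fullyInvariantCore_normal (H : Subgroup G) : H.fullyInvariantCore.Normal :=
  normal_iInf_normal fun f => f.normal_ker

theorem fullyInvariantCore_le (H : Subgroup G) : H.fullyInvariantCore ≤ H := fun _ hx =>
  H.normalCore_le <| (normalCore_eq_ker H).symm ▸ mem_iInf.mp hx (MulAction.toPermHom G (G ⧸ H))

theorem fullyInvariantCore_le_comap (H : Subgroup G) (φ : G →* G) :
    H.fullyInvariantCore ≤ H.fullyInvariantCore.comap φ := fun _ hx =>
  mem_iInf.mpr fun f => mem_iInf.mp hx (f.comp φ)

instance fullyInvariantCore_finiteIndex [Group.FG G] (H : Subgroup G) [H.FiniteIndex] :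
    H.fullyInvariantCore.FiniteIndex :=
  have := MonoidHom.finite_of_fg (G := G) (Q := Equiv.Perm (G ⧸ H))
  finiteIndex_iInf fun _ => inferInstance

end Subgroup

theorem MonoidHom.injective_of_finiteIndex_range {Γ : Type*} [Group Γ] [Group.FG Γ]
    (htf : ∀ g : Γ, g ≠ 1 → ¬IsOfFinOrder g)
    (hres : ∀ g : Γ, g ≠ 1 → ∃ H : Subgroup Γ, H.FiniteIndex ∧ g ∉ H)
    (φ : Γ →* Γ) [φ.range.FiniteIndex] : Function.Injective φ := by
  refine (injective_iff_map_eq_one φ).mpr fun k hk => ?_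
  by_contra hk1
  set d := φ.range.index
  have hpow : ∀ i : Fin d, k ^ ((i : ℕ) + 1) ≠ 1 := fun i =>
    orderOf_eq_zero_iff'.mp (orderOf_eq_zero_iff.mpr (htf k hk1)) _ i.succ_pos
  obtain ⟨H, hH, hkH⟩ := exists_finiteIndex_forall_notMem hres _ hpow
  set N := H.fullyInvariantCore
  let ψ := QuotientGroup.map N N φ (H.fullyInvariantCore_le_comap φ)
  have hkψ : (k : Γ ⧸ N) ∈ ψ.ker := by
    rw [MonoidHom.mem_ker, QuotientGroup.map_mk, hk, QuotientGroup.mk_one]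
  have hd_lt : d < orderOf (k : Γ ⧸ N) := by
    by_contra! hle
    have hpos : 0 < orderOf (k : Γ ⧸ N) := orderOf_pos _
    refine hkH ⟨orderOf (k : Γ ⧸ N) - 1, by omega⟩ (H.fullyInvariantCore_le ?_)
    rw [Nat.sub_add_cancel hpos, ← QuotientGroup.eq_one_iff, QuotientGroup.mk_pow,
      pow_orderOf_eq_one]
  have hle_d : orderOf (k : Γ ⧸ N) ≤ d := calc
    orderOf (k : Γ ⧸ N) ≤ Nat.card ψ.ker :=
      Nat.le_of_dvd Nat.card_pos (ψ.ker.orderOf_dvd_natCard hkψ)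
    _ = ψ.range.index := ψ.card_ker_eq_index_range
    _ ≤ d := Nat.le_of_dvd (Nat.pos_of_ne_zero (FiniteIndex.index_ne_zero))
        (QuotientGroup.index_range_map_dvd N N φ _)
  omega

theorem stmt_2_general {Γ : Type*} [Group Γ]
    (hΓtf : ∀ g : Γ, g ≠ 1 → ¬IsOfFinOrder g)
    (hfg : Group.FG Γ)
    (hresfin : ∀ γ : Γ, γ ≠ 1 → ∃ H : Subgroup Γ, H.FiniteIndex ∧ γ ∉ H)
    (hcoHopf : ∀ ψ : Γ →* Γ, Function.Injective ψ → Function.Surjective ψ)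
    (φ : Γ →* Γ) (hφ : φ.range.FiniteIndex) :
    Function.Bijective φ := by
  have := hfg
  have hinj := φ.injective_of_finiteIndex_range hΓtf hresfin
  exact ⟨hinj, hcoHopf φ hinj⟩

/-- Let `Γ` be an infinite torsion-free group that is finitely generated, residually finite,
and co-Hopfian. Let `φ : Γ → Γ` be an endomorphism whose image has finite index in `Γ`.
Then `φ` is an automorphism of `Γ`. -/
theorem stmt_2 {Γ : Type*} [Group Γ]
    (hΓinf : Infinite Γ) (hΓtf : ∀ g : Γ, g ≠ 1 → ¬IsOfFinOrder g)
    (hfg : Group.FG Γ)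
    (hresfin : ∀ γ : Γ, γ ≠ 1 → ∃ H : Subgroup Γ, H.FiniteIndex ∧ γ ∉ H)
    (hcoHopf : ∀ ψ : Γ →* Γ, Function.Injective ψ → Function.Surjective ψ)
    (φ : Γ →* Γ) (hφ : φ.range.FiniteIndex) :
    Function.Bijective φ :=
  stmt_2_general hΓtf hfg hresfin hcoHopf φ hφ
end

section
/- Let Γ be an infinite group in which every non-trivial normal subgroup has finite index, and let Λ be an infinite torsion-free F-co-Hopfian group. Let φ: Γ → Λ be a group homomorphism such that the image φ(Γ) has finite index in Λ. Then φ is injective, the subgroup φ(Γ) is a finite-index subgroup of Λ isomorphic to Γ, and every finite-index subgroup Λ₁ of Λ that is isomorphic to Γ satisfies [Λ:Λ₁] = [Λ:φ(Γ)]. In particular the minimal index δ(Γ,Λ) equals [Λ:φ(Γ)]. -/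
/-!
A non-trivial kernel of `φ` would have finite index, making `φ(Γ)` finite; a finite subgroup of
finite index forces `Λ` to be finite. So `φ` is injective and `φ(Γ) ≅ Γ`. F-co-Hopficity then
says that all finite-index subgroups isomorphic to `Γ` share the index of `φ(Γ)`, so the set
whose infimum is `δ(Γ,Λ)` is the singleton `{[Λ:φ(Γ)]}`.
-/

def Group.IsFCoHopfian (Λ : Type*) [Group Λ] : Prop :=
  ∀ Λ₁ Λ₂ : Subgroup Λ, Λ₁.FiniteIndex → Λ₂.FiniteIndex → Nonempty (Λ₁ ≃* Λ₂) →
    Λ₁.index = Λ₂.index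

theorem MonoidHom.injective_of_finiteIndex_range_s3 {Γ Λ : Type*} [Group Γ] [Group Λ]
    [Infinite Λ] (hnorm : ∀ N : Subgroup Γ, N.Normal → N ≠ ⊥ → N.FiniteIndex)
    (φ : Γ →* Λ) (hφ : φ.range.FiniteIndex) : Function.Injective φ := by
  by_contra hnotinj
  have hker : φ.ker.FiniteIndex := hnorm _ inferInstance (mt φ.ker_eq_bot_iff.mp hnotinj)
  have hrange : Finite φ.range :=
    (QuotientGroup.quotientKerEquivRange φ).finite_iff.mp inferInstance
  exact not_finite_iff_infinite.mpr ‹Infinite Λ›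
    ((Subgroup.finite_iff_finite_and_finiteIndex φ.range).mpr ⟨hrange, hφ⟩)

theorem Group.IsFCoHopfian.index_eq_of_mulEquiv {Γ Λ : Type*} [Group Γ] [Group Λ]
    (hΛ : Group.IsFCoHopfian Λ) {H K : Subgroup Λ} (hH : H.FiniteIndex) (hK : K.FiniteIndex)
    (eH : Γ ≃* H) (eK : Γ ≃* K) : H.index = K.index :=
  hΛ H K hH hK ⟨eH.symm.trans eK⟩

theorem Group.IsFCoHopfian.setOf_index_eq_singleton {Γ Λ : Type*} [Group Γ] [Group Λ]
    (hΛ : Group.IsFCoHopfian Λ) {H : Subgroup Λ} (hH : H.FiniteIndex) (e : Γ ≃* H) :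
    {k : ℕ | ∃ Λ' : Subgroup Λ, Λ'.FiniteIndex ∧ Nonempty (Γ ≃* Λ') ∧ Λ'.index = k}
      = {H.index} := by
  ext k
  constructor
  · rintro ⟨Λ', hΛ', ⟨e'⟩, rfl⟩
    exact hΛ.index_eq_of_mulEquiv hΛ' hH e' e
  · rintro rfl
    exact ⟨H, hH, ⟨e⟩, rfl⟩

theorem stmt_3_general {Γ Λ : Type*} [Group Γ] [Group Λ]
    (hnorm : ∀ N : Subgroup Γ, N.Normal → N ≠ ⊥ → N.FiniteIndex)
    (hΛinf : Infinite Λ)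
    (hFcoHopf : ∀ Λ₁ Λ₂ : Subgroup Λ, Λ₁.FiniteIndex → Λ₂.FiniteIndex →
      Nonempty (Λ₁ ≃* Λ₂) → Λ₁.index = Λ₂.index)
    (φ : Γ →* Λ) (hφ : φ.range.FiniteIndex) :
    Function.Injective φ ∧
    Nonempty (Γ ≃* φ.range) ∧
    (∀ Λ₁ : Subgroup Λ, Λ₁.FiniteIndex → Nonempty (Γ ≃* Λ₁) → Λ₁.index = φ.range.index) ∧
    sInf {k : ℕ | ∃ Λ' : Subgroup Λ, Λ'.FiniteIndex ∧ Nonempty (Γ ≃* Λ') ∧ Λ'.index = k}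
      = φ.range.index := by
  have hinj : Function.Injective φ := φ.injective_of_finiteIndex_range_s3 hnorm hφ
  let e : Γ ≃* φ.range := MonoidHom.ofInjective hinj
  have hΛ : Group.IsFCoHopfian Λ := hFcoHopf
  refine ⟨hinj, ⟨e⟩, fun Λ₁ hΛ₁ ⟨e₁⟩ ↦ hΛ.index_eq_of_mulEquiv hΛ₁ hφ e₁ e, ?_⟩
  rw [hΛ.setOf_index_eq_singleton hφ e, csInf_singleton]

/-- Let `Γ` be an infinite group in which every non-trivial normal subgroup has finite index,
and let `Λ` be an infinite torsion-free F-co-Hopfian group.  Let `φ : Γ → Λ` be a group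
homomorphism whose image has finite index in `Λ`.  Then `φ` is injective, its range is a
finite-index subgroup of `Λ` isomorphic to `Γ`, every finite-index subgroup `Λ₁ ⊆ Λ`
isomorphic to `Γ` satisfies `[Λ:Λ₁] = [Λ:φ(Γ)]`, and the minimal index
`δ(Γ,Λ)` equals `[Λ:φ(Γ)]`. -/
theorem stmt_3 {Γ Λ : Type*} [Group Γ] [Group Λ]
    (hΓinf : Infinite Γ)
    (hnorm : ∀ N : Subgroup Γ, N.Normal → N ≠ ⊥ → N.FiniteIndex)
    (hΛinf : Infinite Λ) (hΛtf : ∀ g : Λ, g ≠ 1 → ¬IsOfFinOrder g)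
    (hFcoHopf : ∀ Λ₁ Λ₂ : Subgroup Λ, Λ₁.FiniteIndex → Λ₂.FiniteIndex →
      Nonempty (Λ₁ ≃* Λ₂) → Λ₁.index = Λ₂.index)
    (φ : Γ →* Λ) (hφ : φ.range.FiniteIndex) :
    Function.Injective φ ∧
    Nonempty (Γ ≃* φ.range) ∧
    (∀ Λ₁ : Subgroup Λ, Λ₁.FiniteIndex → Nonempty (Γ ≃* Λ₁) → Λ₁.index = φ.range.index) ∧
    sInf {k : ℕ | ∃ Λ' : Subgroup Λ, Λ'.FiniteIndex ∧ Nonempty (Γ ≃* Λ') ∧ Λ'.index = k}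
      = φ.range.index :=
  stmt_3_general hnorm hΛinf hFcoHopf φ hφ
end

section
/- Let N ≥ 1 and let A ∈ GL(N,ℝ) be an invertible real N×N matrix which has a complex eigenvalue z (i.e., a root z ∈ ℂ of the characteristic polynomial of A) with |z| ≠ 1. Then for any integers m, n with |m| ≠ |n|, the matrices A^m and A^n are not conjugate in GL(N,ℝ): there is no P ∈ GL(N,ℝ) with P A^m P⁻¹ = A^n. -/
/-!
Take `c(S) = sup_{w ∈ S} |log ‖w‖|` for the spectrum `S` of `A` over `ℂ`. It is conjugation
invariant, it is positive because of `z`, and by spectral mapping `c(spec A^k) = |k| c(spec A)`,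
so conjugate powers `A^m`, `A^n` force `|m| c = |n| c`.
-/

open Real Pointwise

theorem spectrum.map_zpow_of_nonempty {𝕜 A : Type*} [Field 𝕜] [IsAlgClosed 𝕜] [Ring A]
    [Algebra 𝕜 A] {u : Aˣ} (hu : (spectrum 𝕜 (u : A)).Nonempty) (k : ℤ) :
    spectrum 𝕜 ((u ^ k : Aˣ) : A) = (· ^ k) '' spectrum 𝕜 (u : A) := by
  cases k with
  | ofNat n => simpa using spectrum.map_pow_of_nonempty hu n
  | negSucc n =>
    rw [zpow_negSucc, ← spectrum.map_inv, Units.val_pow_eq_pow_val,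
      spectrum.map_pow_of_nonempty hu, ← Set.image_inv_eq_inv, Set.image_image]
    simp only [zpow_negSucc]

section LogNorm

variable {𝕜 : Type*} [NormedDivisionRing 𝕜]

noncomputable def sSupAbsLogNorm (S : Set 𝕜) : ℝ := sSup ((fun w => |log ‖w‖|) '' S)

theorem abs_log_norm_zpow (w : 𝕜) (k : ℤ) : |log ‖w ^ k‖| = |(k : ℝ)| * |log ‖w‖| := by
  rw [norm_zpow, Real.log_zpow, abs_mul]

theorem sSupAbsLogNorm_image_zpow (S : Set 𝕜) (k : ℤ) :
    sSupAbsLogNorm ((· ^ k) '' S) = |(k : ℝ)| * sSupAbsLogNorm S := by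
  have hsmul : (fun w => |log ‖w‖|) '' ((· ^ k) '' S) =
      |(k : ℝ)| • (fun w => |log ‖w‖|) '' S := by
    rw [Set.image_image, ← Set.image_smul, Set.image_image]
    simp only [abs_log_norm_zpow, smul_eq_mul]
  rw [sSupAbsLogNorm, hsmul, Real.sSup_smul_of_nonneg (by positivity), smul_eq_mul,
    sSupAbsLogNorm]

theorem sSupAbsLogNorm_pos {S : Set 𝕜} (hS : S.Finite) {z : 𝕜} (hz : z ∈ S) (hz0 : z ≠ 0)
    (hz1 : ‖z‖ ≠ 1) : 0 < sSupAbsLogNorm S :=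
  (abs_pos.2 (log_ne_zero_of_pos_of_ne_one (norm_pos_iff.2 hz0) hz1)).trans_le
    (le_csSup (hS.image _).bddAbove (Set.mem_image_of_mem _ hz))

end LogNorm

theorem abs_eq_abs_of_units_zpow_conj {𝕜 A : Type*} [NormedField 𝕜] [IsAlgClosed 𝕜] [Ring A]
    [Algebra 𝕜 A] {u : Aˣ} (hfin : (spectrum 𝕜 (u : A)).Finite) {z : 𝕜}
    (hz : z ∈ spectrum 𝕜 (u : A)) (hz1 : ‖z‖ ≠ 1) {m n : ℤ} {v : Aˣ}
    (h : v * u ^ m * v⁻¹ = u ^ n) : |m| = |n| := by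
  have hz0 : z ≠ 0 := by
    rintro rfl
    exact spectrum.zero_notMem 𝕜 u.isUnit hz
  have hspec : spectrum 𝕜 ((u ^ m : Aˣ) : A) = spectrum 𝕜 ((u ^ n : Aˣ) : A) := by
    rw [← h, Units.val_mul, Units.val_mul, spectrum.units_conjugate]
  have hc := congrArg sSupAbsLogNorm hspec
  rw [spectrum.map_zpow_of_nonempty ⟨z, hz⟩, spectrum.map_zpow_of_nonempty ⟨z, hz⟩,
    sSupAbsLogNorm_image_zpow, sSupAbsLogNorm_image_zpow] at hc
  exact_mod_cast mul_right_cancel₀ (sSupAbsLogNorm_pos hfin hz hz0 hz1).ne' hc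

theorem stmt_7_general (N : ℕ) (A : GL (Fin N) ℝ) (z : ℂ)
    (hz : (((A : Matrix (Fin N) (Fin N) ℝ).charpoly).map (algebraMap ℝ ℂ)).IsRoot z)
    (hz1 : ‖z‖ ≠ 1)
    (m n : ℤ) (hmn : |m| ≠ |n|) :
    ¬ ∃ P : GL (Fin N) ℝ, P * A ^ m * P⁻¹ = A ^ n := by
  rintro ⟨P, hP⟩
  let toGLℂ := Matrix.GeneralLinearGroup.map (n := Fin N) (algebraMap ℝ ℂ)
  have hzA : z ∈ spectrum ℂ (toGLℂ A : Matrix (Fin N) (Fin N) ℂ) := by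
    rwa [Matrix.mem_spectrum_iff_isRoot_charpoly, Matrix.GeneralLinearGroup.val_map_apply,
      Matrix.charpoly_map]
  refine hmn (abs_eq_abs_of_units_zpow_conj (Matrix.finite_spectrum _) hzA hz1 (v := toGLℂ P) ?_)
  rw [← map_zpow, ← map_inv, ← map_mul, ← map_mul, hP, map_zpow]

/-- Let `A ∈ GL(N,ℝ)` have a complex eigenvalue `z` (a root of the characteristic
polynomial of `A` in `ℂ`) with `|z| ≠ 1`.  Then for any integers `m, n` with `|m| ≠ |n|`,
the matrices `A^m` and `A^n` are not conjugate in `GL(N,ℝ)`. -/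
theorem stmt_7 (N : ℕ) (hN : 1 ≤ N) (A : GL (Fin N) ℝ) (z : ℂ)
    (hz : (((A : Matrix (Fin N) (Fin N) ℝ).charpoly).map (algebraMap ℝ ℂ)).IsRoot z)
    (hz1 : ‖z‖ ≠ 1)
    (m n : ℤ) (hmn : |m| ≠ |n|) :
    ¬ ∃ P : GL (Fin N) ℝ, P * A ^ m * P⁻¹ = A ^ n :=
  stmt_7_general N A z hz hz1 m n hmn
end

section
/- Let N ≥ 1 and let Λ be a subgroup of GL(N,ℝ) containing an element λ which has a complex eigenvalue z (i.e., a root z ∈ ℂ of the characteristic polynomial of λ) with |z| ≠ 1. Then Λ has infinitely many conjugacy classes. -/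
/-!
Complexify: conjugate elements of `Λ` have the same complex spectrum. Replacing `l` by `l⁻¹` if
necessary, some `g ∈ Λ` has an eigenvalue of modulus `> 1`; if `r > 1` is the largest modulus of an
eigenvalue of `g`, then the largest modulus for `g ^ n` is `r ^ n`, so the powers of `g` have
pairwise distinct spectra and lie in pairwise distinct conjugacy classes.
-/

lemma IsConj.spectrum_eq {R A : Type*} [CommSemiring R] [Ring A] [Algebra R A] {a b : A}
    (h : IsConj a b) : spectrum R a = spectrum R b := by
  obtain ⟨u, hu⟩ := h
  rw [← spectrum.units_conjugate (u := u), hu.eq, mul_assoc, Units.mul_inv, mul_one]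

theorem ConjClasses.infinite_of_injective_comp {G X ι : Type*} [Monoid G] [Infinite ι]
    (φ : G → X) (hφ : ∀ a b, IsConj a b → φ a = φ b) (u : ι → G)
    (hu : Function.Injective (φ ∘ u)) : Infinite (ConjClasses G) :=
  Infinite.of_injective (ConjClasses.mk ∘ u) fun _ _ h =>
    hu (hφ _ _ (ConjClasses.mk_eq_mk_iff_isConj.mp h))

lemma Matrix.mem_spectrum_map_iff_isRoot_charpoly_map {n K L : Type*} [Fintype n] [DecidableEq n]
    [Field K] [Field L] (f : K →+* L) (A : Matrix n n K) {z : L} :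
    z ∈ spectrum L (A.map f) ↔ (A.charpoly.map f).IsRoot z := by
  rw [Matrix.mem_spectrum_iff_isRoot_charpoly, Matrix.charpoly_map]

namespace spectrum

variable {𝕜 A : Type*} [NormedField 𝕜] [Ring A] [Algebra 𝕜 A]

lemma exists_one_lt_norm_of_norm_ne_one {u : Aˣ} {z : 𝕜} (hz : z ∈ spectrum 𝕜 (u : A))
    (hz1 : ‖z‖ ≠ 1) : ∃ v ∈ ({u, u⁻¹} : Set Aˣ), ∃ w ∈ spectrum 𝕜 (v : A), 1 < ‖w‖ := by
  rcases hz1.lt_or_gt with h | h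
  · have hz0 : z ≠ 0 := by rintro rfl; exact u.zero_notMem_spectrum 𝕜 hz
    refine ⟨u⁻¹, by simp, z⁻¹, ?_, ?_⟩
    · simpa using (inv_mem_iff (r := Units.mk0 z hz0) (a := u)).mp hz
    · rwa [norm_inv, one_lt_inv₀ (norm_pos_iff.mpr hz0)]
  · exact ⟨u, by simp, z, hz, h⟩

variable [IsAlgClosed 𝕜]

lemma isGreatest_norm_image_pow {a : A} {r : ℝ} (hr : IsGreatest (norm '' spectrum 𝕜 a) r)
    {n : ℕ} (hn : 0 < n) : IsGreatest (norm '' spectrum 𝕜 (a ^ n)) (r ^ n) := by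
  have hpow : MonotoneOn (· ^ n) (norm '' spectrum 𝕜 a) := fun x ⟨v, _, hv⟩ y _ hxy =>
    pow_le_pow_left₀ (hv ▸ norm_nonneg v) hxy n
  rw [map_pow_of_pos a hn]
  simpa only [norm_pow, Set.image_image] using hpow.map_isGreatest hr

theorem injective_pow_succ {a : A} (hfin : (spectrum 𝕜 a).Finite) {z : 𝕜}
    (hz : z ∈ spectrum 𝕜 a) (hz1 : 1 < ‖z‖) :
    Function.Injective fun n : ℕ => spectrum 𝕜 (a ^ (n + 1)) := by
  obtain ⟨w, hw, hmax⟩ := Set.exists_max_image _ norm hfin ⟨z, hz⟩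
  have hr : IsGreatest (norm '' spectrum 𝕜 a) ‖w‖ :=
    ⟨⟨w, hw, rfl⟩, Set.forall_mem_image.mpr hmax⟩
  have hw1 : 1 < ‖w‖ := hz1.trans_le (hmax z hz)
  intro n m hnm
  have hpow := (isGreatest_norm_image_pow hr n.succ_pos).unique
    (by simpa only [hnm] using isGreatest_norm_image_pow hr m.succ_pos)
  simpa using pow_right_injective₀ (zero_lt_one.trans hw1) hw1.ne' hpow

end spectrum

theorem stmt_8_general (N : ℕ) (Λ : Subgroup (GL (Fin N) ℝ))
    (l : GL (Fin N) ℝ) (hl : l ∈ Λ) (z : ℂ)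
    (hz : (((l : Matrix (Fin N) (Fin N) ℝ).charpoly).map (algebraMap ℝ ℂ)).IsRoot z)
    (hz1 : ‖z‖ ≠ 1) :
    Infinite (ConjClasses Λ) := by
  let χ : Λ →* GL (Fin N) ℂ := (Matrix.GeneralLinearGroup.map (algebraMap ℝ ℂ)).comp Λ.subtype
  have hzl : z ∈ spectrum ℂ ((χ ⟨l, hl⟩ : GL (Fin N) ℂ) : Matrix (Fin N) (Fin N) ℂ) :=
    (Matrix.mem_spectrum_map_iff_isRoot_charpoly_map _ _).mpr hz
  obtain ⟨g, hg, w, hw, hw1⟩ := spectrum.exists_one_lt_norm_of_norm_ne_one hzl hz1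
  obtain ⟨g', rfl⟩ : ∃ g' : Λ, χ g' = g := by
    rcases hg with rfl | rfl
    exacts [⟨_, rfl⟩, ⟨⟨l, hl⟩⁻¹, map_inv χ _⟩]
  refine ConjClasses.infinite_of_injective_comp
    (fun k => spectrum ℂ ((χ k : GL (Fin N) ℂ) : Matrix (Fin N) (Fin N) ℂ))
    (fun a b h => (((Units.coeHom _).comp χ).map_isConj h).spectrum_eq)
    (fun n : ℕ => g' ^ (n + 1)) ?_
  simpa [Function.comp_def] using
    spectrum.injective_pow_succ (Matrix.finite_spectrum _) hw hw1

/-- Let `Λ` be a subgroup of `GL(N,ℝ)` containing an element `l` which has a complex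
eigenvalue `z` (a root of the characteristic polynomial of `l` in `ℂ`) with `|z| ≠ 1`.
Then `Λ` has infinitely many conjugacy classes. -/
theorem stmt_8 (N : ℕ) (hN : 1 ≤ N) (Λ : Subgroup (GL (Fin N) ℝ))
    (l : GL (Fin N) ℝ) (hl : l ∈ Λ) (z : ℂ)
    (hz : (((l : Matrix (Fin N) (Fin N) ℝ).charpoly).map (algebraMap ℝ ℂ)).IsRoot z)
    (hz1 : ‖z‖ ≠ 1) :
    Infinite (ConjClasses Λ) :=
  stmt_8_general N Λ l hl z hz hz1
end
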